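/- arXiv:2410.03476 — 3 statements merged into one kernel-verified Lean document; each statement's English description precedes it below -/
import Mathlib

section
/- The unital k-algebra generated by G, X, Y with relations G² = 1, X² = X, Y² = 0, GX = XG, GY = −YG, XY = Y, YX = 0 is a well-defined associative unital algebra of dimension 6 over k, with basis {1, G, X, GX, Y, GY}. -/
/-- Relations for the quasi-bialgebra `underline H`: generators `G, X, Y`
(indexed `0, 1, 2`) with `G² = 1`, `X² = X`, `Y² = 0`, `GX = XG`, `GY = −YG`,
`XY = Y`, `YX = 0`. -/
inductive Rel6 (k : Type*) [Field k] :
    FreeAlgebra k (Fin 3) → FreeAlgebra k (Fin 3) → Prop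
  | gg : Rel6 k (FreeAlgebra.ι k 0 * FreeAlgebra.ι k 0) 1
  | xx : Rel6 k (FreeAlgebra.ι k 1 * FreeAlgebra.ι k 1) (FreeAlgebra.ι k 1)
  | yy : Rel6 k (FreeAlgebra.ι k 2 * FreeAlgebra.ι k 2) 0
  | gx : Rel6 k (FreeAlgebra.ι k 0 * FreeAlgebra.ι k 1)
      (FreeAlgebra.ι k 1 * FreeAlgebra.ι k 0)
  | gy : Rel6 k (FreeAlgebra.ι k 0 * FreeAlgebra.ι k 2)
      (-(FreeAlgebra.ι k 2 * FreeAlgebra.ι k 0))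
  | xy : Rel6 k (FreeAlgebra.ι k 1 * FreeAlgebra.ι k 2) (FreeAlgebra.ι k 2)
  | yx : Rel6 k (FreeAlgebra.ι k 2 * FreeAlgebra.ι k 1) 0


namespace Stmt10Aux

/-- Integer matrices realizing the left regular representation of the algebra
on the basis `1, G, X, GX, Y, GY`. -/
def MZ : Fin 3 → Matrix (Fin 6) (Fin 6) ℤ :=
  ![!![0,1,0,0,0,0; 1,0,0,0,0,0; 0,0,0,1,0,0; 0,0,1,0,0,0; 0,0,0,0,0,1; 0,0,0,0,1,0],
    !![0,0,0,0,0,0; 0,0,0,0,0,0; 1,0,1,0,0,0; 0,1,0,1,0,0; 0,0,0,0,1,0; 0,0,0,0,0,1],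
    !![0,0,0,0,0,0; 0,0,0,0,0,0; 0,0,0,0,0,0; 0,0,0,0,0,0; 1,0,0,0,0,0; 0,-1,0,0,0,0]]

variable (k : Type*) [Field k]

/-- The same matrices over `k`. -/
noncomputable def Mk : Fin 3 → Matrix (Fin 6) (Fin 6) k :=
  fun i => (MZ i).map (Int.castRingHom k)

/-- The representation of the free algebra. -/
noncomputable def φ : FreeAlgebra k (Fin 3) →ₐ[k] Matrix (Fin 6) (Fin 6) k :=
  FreeAlgebra.lift k (Mk k)

lemma φ_rel : ∀ ⦃a b⦄, Rel6 k a b → φ k a = φ k b := by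
  intro a b h
  cases h <;>
    simp only [φ, map_mul, map_one, map_zero, map_neg, FreeAlgebra.lift_ι_apply, Mk,
      ← Matrix.map_mul] <;>
  · first
    | (rw [show (MZ 0 * MZ 0 : Matrix (Fin 6) (Fin 6) ℤ) = 1 by decide]; simp)
    | (rw [show (MZ 1 * MZ 1 : Matrix (Fin 6) (Fin 6) ℤ) = MZ 1 by decide])
    | (rw [show (MZ 2 * MZ 2 : Matrix (Fin 6) (Fin 6) ℤ) = 0 by decide]; simp)
    | (rw [show (MZ 0 * MZ 1 : Matrix (Fin 6) (Fin 6) ℤ) = MZ 1 * MZ 0 by decide])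
    | (rw [show (MZ 0 * MZ 2 : Matrix (Fin 6) (Fin 6) ℤ) = -(MZ 2 * MZ 0) by decide]
       ext i j; simp [Matrix.map_apply])
    | (rw [show (MZ 1 * MZ 2 : Matrix (Fin 6) (Fin 6) ℤ) = MZ 2 by decide])
    | (rw [show (MZ 2 * MZ 1 : Matrix (Fin 6) (Fin 6) ℤ) = 0 by decide]; simp)

/-- The induced representation of the quotient. -/
noncomputable def Φ : RingQuot (Rel6 k) →ₐ[k] Matrix (Fin 6) (Fin 6) k :=
  RingQuot.liftAlgHom k ⟨φ k, φ_rel k⟩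

noncomputable def Gq : RingQuot (Rel6 k) := RingQuot.mkAlgHom k (Rel6 k) (FreeAlgebra.ι k 0)
noncomputable def Xq : RingQuot (Rel6 k) := RingQuot.mkAlgHom k (Rel6 k) (FreeAlgebra.ι k 1)
noncomputable def Yq : RingQuot (Rel6 k) := RingQuot.mkAlgHom k (Rel6 k) (FreeAlgebra.ι k 2)

noncomputable def vv : Fin 6 → RingQuot (Rel6 k) :=
  ![1, Gq k, Xq k, Gq k * Xq k, Yq k, Gq k * Yq k]

lemma rgg : Gq k * Gq k = 1 := by
  simpa [Gq] using RingQuot.mkAlgHom_rel k (Rel6.gg (k := k))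
lemma rxx : Xq k * Xq k = Xq k := by
  simpa [Xq] using RingQuot.mkAlgHom_rel k (Rel6.xx (k := k))
lemma ryy : Yq k * Yq k = 0 := by
  simpa [Yq] using RingQuot.mkAlgHom_rel k (Rel6.yy (k := k))
lemma rxg : Xq k * Gq k = Gq k * Xq k := by
  simpa [Gq, Xq] using (RingQuot.mkAlgHom_rel k (Rel6.gx (k := k))).symm
lemma ryg : Yq k * Gq k = -(Gq k * Yq k) := by
  have := RingQuot.mkAlgHom_rel k (Rel6.gy (k := k))
  simp only [map_mul, map_neg] at this
  simp only [Gq, Yq]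
  rw [this, neg_neg]
lemma rxy : Xq k * Yq k = Yq k := by
  simpa [Xq, Yq] using RingQuot.mkAlgHom_rel k (Rel6.xy (k := k))
lemma ryx : Yq k * Xq k = 0 := by
  simpa [Xq, Yq] using RingQuot.mkAlgHom_rel k (Rel6.yx (k := k))

lemma qneg_mul (u v : RingQuot (Rel6 k)) : -u * v = -(u * v) := neg_mul u v
lemma qmul_neg (u v : RingQuot (Rel6 k)) : u * -v = -(u * v) := mul_neg u v
lemma qneg_neg (u : RingQuot (Rel6 k)) : - -u = u := neg_neg u
lemma qmul_zero (u : RingQuot (Rel6 k)) : u * 0 = 0 := mul_zero u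
lemma qzero_mul (u : RingQuot (Rel6 k)) : 0 * u = 0 := zero_mul u
lemma qneg_zero : -(0 : RingQuot (Rel6 k)) = 0 := neg_zero

lemma rgg' (z) : Gq k * (Gq k * z) = z := by rw [← mul_assoc, rgg, one_mul]
lemma rxx' (z) : Xq k * (Xq k * z) = Xq k * z := by rw [← mul_assoc, rxx]
lemma ryy' (z) : Yq k * (Yq k * z) = 0 := by rw [← mul_assoc, ryy, zero_mul]
lemma rxg' (z) : Xq k * (Gq k * z) = Gq k * (Xq k * z) := by
  rw [← mul_assoc, rxg, mul_assoc]
lemma ryg' (z) : Yq k * (Gq k * z) = -(Gq k * (Yq k * z)) := by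
  rw [← mul_assoc, ryg, qneg_mul, mul_assoc]
lemma rxy' (z) : Xq k * (Yq k * z) = Yq k * z := by rw [← mul_assoc, rxy]
lemma ryx' (z) : Yq k * (Xq k * z) = 0 := by rw [← mul_assoc, ryx, zero_mul]

end Stmt10Aux

namespace Stmt10Aux

/-- Integer matrices for the images of the six basis elements. -/
def A : Fin 6 → Matrix (Fin 6) (Fin 6) ℤ :=
  ![1, MZ 0, MZ 1, MZ 0 * MZ 1, MZ 2, MZ 0 * MZ 2]

lemma hcol : ∀ i r : Fin 6, A i r 0 = if r = i then 1 else 0 := by decide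

variable (k : Type*) [Field k]

lemma hΦ : ∀ i, Φ k (vv k i) = (A i).map (Int.castRingHom k) := by
  have hg : Φ k (Gq k) = Mk k 0 := by
    simp [Φ, Gq, RingQuot.liftAlgHom_mkAlgHom_apply, φ, FreeAlgebra.lift_ι_apply]
  have hx : Φ k (Xq k) = Mk k 1 := by
    simp [Φ, Xq, RingQuot.liftAlgHom_mkAlgHom_apply, φ, FreeAlgebra.lift_ι_apply]
  have hy : Φ k (Yq k) = Mk k 2 := by
    simp [Φ, Yq, RingQuot.liftAlgHom_mkAlgHom_apply, φ, FreeAlgebra.lift_ι_apply]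
  have hmm : ∀ M N : Matrix (Fin 6) (Fin 6) ℤ,
      ((M.map fun z => ((z : ℤ) : k)) * (N.map fun z => ((z : ℤ) : k)))
        = (M * N).map (fun z => ((z : ℤ) : k)) := by
    intro M N
    simpa using (Matrix.map_mul (L := M) (M := N) (f := Int.castRingHom k)).symm
  intro i
  fin_cases i <;>
    simp [vv, A, map_one, map_mul, hg, hx, hy, Mk, Matrix.map_one, hmm,
      show (5 : Fin 6) = Fin.succ 4 from rfl, Matrix.cons_val_succ]

/-- Evaluation of the representation on the first column. -/
noncomputable def L : RingQuot (Rel6 k) →ₗ[k] (Fin 6 → k) where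
  toFun a := fun r => Φ k a r 0
  map_add' a b := by funext r; simp [map_add, Matrix.add_apply]
  map_smul' c a := by funext r; simp [map_smul, Matrix.smul_apply]

lemma hLI : LinearIndependent k (vv k) := by
  apply LinearIndependent.of_comp (L k)
  have hc : ⇑(L k) ∘ vv k = fun i => Pi.single i (1 : k) := by
    funext i r
    show Φ k (vv k i) r 0 = _
    rw [hΦ k i]
    simp [Matrix.map_apply, hcol i r, Pi.single_apply, apply_ite (Int.castRingHom k)]
  rw [hc]
  have := (Pi.basisFun k (Fin 6)).linearIndependent
  rwa [show ⇑(Pi.basisFun k (Fin 6)) = fun i => Pi.single i (1 : k) from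
    funext fun i => Pi.basisFun_apply k (Fin 6) i] at this

lemma hspan : ⊤ ≤ Submodule.span k (Set.range (vv k)) := by
  set S := Submodule.span k (Set.range (vv k)) with hS
  have hmem : ∀ i, vv k i ∈ S := fun i => Submodule.subset_span ⟨i, rfl⟩
  have h1 : (1 : RingQuot (Rel6 k)) ∈ S := by simpa [vv] using hmem 0
  have hg : Gq k ∈ S := by simpa [vv] using hmem 1
  have hx : Xq k ∈ S := by simpa [vv] using hmem 2
  have hgx : Gq k * Xq k ∈ S := by simpa [vv] using hmem 3
  have hy : Yq k ∈ S := by simpa [vv] using hmem 4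
  have hgy : Gq k * Yq k ∈ S := by
    simpa [vv, show (5 : Fin 6) = Fin.succ 4 from rfl, Matrix.cons_val_succ] using hmem 5
  have hprod : ∀ u ∈ S, ∀ w ∈ S, u * w ∈ S := by
    intro u hu
    induction hu using Submodule.span_induction with
    | mem u hu =>
      intro w hw
      induction hw using Submodule.span_induction with
      | mem w hw =>
        obtain ⟨i, rfl⟩ := hu
        obtain ⟨j, rfl⟩ := hw
        fin_cases i <;> fin_cases j <;>
          · simp only [vv, Fin.zero_eta, Fin.mk_one, Fin.reduceFinMk, Matrix.cons_val_zero, Matrix.cons_val_one, Matrix.head_cons,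
              Matrix.cons_val_two, Matrix.tail_cons, Matrix.cons_val_three,
              Matrix.cons_val_four, show (5 : Fin 6) = Fin.succ 4 from rfl,
              Matrix.cons_val_succ, rgg, rgg', rxx, rxx', ryy, ryy', rxg, rxg', ryg,
              ryg', rxy, rxy', ryx, ryx', qneg_mul, qmul_neg, qneg_neg, qmul_zero,
              qzero_mul, qneg_zero, one_mul, mul_one, mul_assoc]
            first
            | exact h1 | exact hg | exact hx | exact hgx | exact hy | exact hgy
            | exact S.zero_mem
            | exact neg_mem hy | exact neg_mem hgy
      | zero => rw [mul_zero]; exact S.zero_mem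
      | add w₁ w₂ hw₁ hw₂ ih₁ ih₂ => rw [mul_add]; exact add_mem ih₁ ih₂
      | smul c w hw ih => rw [mul_smul_comm]; exact S.smul_mem c ih
    | zero => intro w hw; rw [zero_mul]; exact S.zero_mem
    | add u₁ u₂ hu₁ hu₂ ih₁ ih₂ => intro w hw; rw [add_mul]; exact add_mem (ih₁ w hw) (ih₂ w hw)
    | smul c u hu ih => intro w hw; rw [smul_mul_assoc]; exact S.smul_mem c (ih w hw)
  have hall : ∀ p : FreeAlgebra k (Fin 3), RingQuot.mkAlgHom k (Rel6 k) p ∈ S := by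
    intro p
    induction p using FreeAlgebra.induction with
    | grade0 r =>
      rw [AlgHom.commutes, Algebra.algebraMap_eq_smul_one]
      exact S.smul_mem r h1
    | grade1 i =>
      fin_cases i
      · exact hg
      · exact hx
      · exact hy
    | mul a b ha hb => rw [map_mul]; exact hprod _ ha _ hb
    | add a b ha hb => rw [map_add]; exact add_mem ha hb
  intro a _
  obtain ⟨p, rfl⟩ := RingQuot.mkAlgHom_surjective k (Rel6 k) a
  exact hall p

end Stmt10Aux

open Stmt10Aux in
/-- The unital `k`-algebra generated by `G, X, Y` with relations `G² = 1`,
`X² = X`, `Y² = 0`, `GX = XG`, `GY = −YG`, `XY = Y`, `YX = 0` is 6-dimensional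
with basis `{1, G, X, GX, Y, GY}`. -/
theorem stmt10 (k : Type*) [Field k] :
    Module.finrank k (RingQuot (Rel6 k)) = 6 ∧
    ∃ b : Module.Basis (Fin 6) k (RingQuot (Rel6 k)),
      (fun i => b i) =
        ![1,
          RingQuot.mkAlgHom k (Rel6 k) (FreeAlgebra.ι k 0),
          RingQuot.mkAlgHom k (Rel6 k) (FreeAlgebra.ι k 1),
          RingQuot.mkAlgHom k (Rel6 k) (FreeAlgebra.ι k 0) *
            RingQuot.mkAlgHom k (Rel6 k) (FreeAlgebra.ι k 1),
          RingQuot.mkAlgHom k (Rel6 k) (FreeAlgebra.ι k 2),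
          RingQuot.mkAlgHom k (Rel6 k) (FreeAlgebra.ι k 0) *
            RingQuot.mkAlgHom k (Rel6 k) (FreeAlgebra.ι k 2)] := by
  have b : Module.Basis (Fin 6) k (RingQuot (Rel6 k)) := Module.Basis.mk (hLI k) (hspan k)
  refine ⟨?_, ⟨Module.Basis.mk (hLI k) (hspan k), ?_⟩⟩
  · rw [Module.finrank_eq_card_basis b, Fintype.card_fin]
  · have : (fun i => (Module.Basis.mk (hLI k) (hspan k)) i) = vv k := Module.Basis.coe_mk _ _
    rw [this]
    rfl
end

section
/- The unital k-algebra A generated by G, X, Y with relations G² = 1, X² = X, Y² = 0, GX = XG, GY = −YG, XY = Y, YX = 0 is not semisimple: the two-sided ideal generated by Y is a nonzero nilpotent ideal (indeed (AYA)² = 0). -/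
/-- Relations: `G² = 1`, `X² = X`, `Y² = 0`, `GX = XG`, `GY = −YG`, `XY = Y`,
`YX = 0` on generators `G, X, Y` (indexed `0, 1, 2`). -/
inductive Rel6' (k : Type*) [Field k] :
    FreeAlgebra k (Fin 3) → FreeAlgebra k (Fin 3) → Prop
  | gg : Rel6' k (FreeAlgebra.ι k 0 * FreeAlgebra.ι k 0) 1
  | xx : Rel6' k (FreeAlgebra.ι k 1 * FreeAlgebra.ι k 1) (FreeAlgebra.ι k 1)
  | yy : Rel6' k (FreeAlgebra.ι k 2 * FreeAlgebra.ι k 2) 0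
  | gx : Rel6' k (FreeAlgebra.ι k 0 * FreeAlgebra.ι k 1)
      (FreeAlgebra.ι k 1 * FreeAlgebra.ι k 0)
  | gy : Rel6' k (FreeAlgebra.ι k 0 * FreeAlgebra.ι k 2)
      (-(FreeAlgebra.ι k 2 * FreeAlgebra.ι k 0))
  | xy : Rel6' k (FreeAlgebra.ι k 1 * FreeAlgebra.ι k 2) (FreeAlgebra.ι k 2)
  | yx : Rel6' k (FreeAlgebra.ι k 2 * FreeAlgebra.ι k 1) 0

namespace Stmt11Aux

variable (k : Type*) [Field k]

noncomputable def Gq : RingQuot (Rel6' k) :=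
  RingQuot.mkAlgHom k (Rel6' k) (FreeAlgebra.ι k 0)
noncomputable def Xq : RingQuot (Rel6' k) :=
  RingQuot.mkAlgHom k (Rel6' k) (FreeAlgebra.ι k 1)
noncomputable def Yq : RingQuot (Rel6' k) :=
  RingQuot.mkAlgHom k (Rel6' k) (FreeAlgebra.ι k 2)

lemma mul_neg' (x y : RingQuot (Rel6' k)) : x * -y = -(x * y) := mul_neg x y
lemma neg_zero' : -(0 : RingQuot (Rel6' k)) = 0 := neg_zero

lemma rel_gg : Gq k * Gq k = 1 := by
  have := RingQuot.mkAlgHom_rel k (Rel6'.gg (k := k)); simpa [Gq, ← map_mul] using this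
lemma rel_yy : Yq k * Yq k = 0 := by
  have := RingQuot.mkAlgHom_rel k (Rel6'.yy (k := k)); simpa [Yq, ← map_mul] using this
lemma rel_gx : Gq k * Xq k = Xq k * Gq k := by
  have := RingQuot.mkAlgHom_rel k (Rel6'.gx (k := k)); simpa [Gq, Xq, ← map_mul] using this
lemma rel_gy : Gq k * Yq k = -(Yq k * Gq k) := by
  have := RingQuot.mkAlgHom_rel k (Rel6'.gy (k := k)); simpa [Gq, Yq, ← map_mul] using this
lemma rel_yx : Yq k * Xq k = 0 := by
  have := RingQuot.mkAlgHom_rel k (Rel6'.yx (k := k)); simpa [Yq, Xq, ← map_mul] using this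

/-- The span of `Y` and `YG`. -/
noncomputable def S : Submodule k (RingQuot (Rel6' k)) :=
  Submodule.span k {Yq k, Yq k * Gq k}

lemma mem_S_Y : Yq k ∈ S k := Submodule.subset_span (by left; rfl)

lemma S_mul_gen (i : Fin 3) {s : RingQuot (Rel6' k)} (hs : s ∈ S k) :
    s * RingQuot.mkAlgHom k (Rel6' k) (FreeAlgebra.ι k i) ∈ S k := by
  induction hs using Submodule.span_induction with
  | mem x h =>
    rcases h with h | h <;> subst h <;> fin_cases i
    · show Yq k * Gq k ∈ S k
      exact Submodule.subset_span (Or.inr rfl)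
    · show Yq k * Xq k ∈ S k
      rw [rel_yx]; exact (S k).zero_mem
    · show Yq k * Yq k ∈ S k
      rw [rel_yy]; exact (S k).zero_mem
    · show Yq k * Gq k * Gq k ∈ S k
      rw [mul_assoc, rel_gg, mul_one]; exact mem_S_Y k
    · show Yq k * Gq k * Xq k ∈ S k
      rw [mul_assoc, rel_gx, ← mul_assoc, rel_yx, zero_mul]; exact (S k).zero_mem
    · show Yq k * Gq k * Yq k ∈ S k
      rw [mul_assoc, rel_gy, mul_neg', ← mul_assoc, rel_yy, zero_mul, neg_zero']
      exact (S k).zero_mem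
  | zero => simp
  | add x y hx hy ihx ihy => simpa [add_mul] using (S k).add_mem ihx ihy
  | smul a x hx ih => simpa [smul_mul_assoc] using (S k).smul_mem a ih

lemma S_mul_mk (u : FreeAlgebra k (Fin 3)) :
    ∀ s ∈ S k, s * RingQuot.mkAlgHom k (Rel6' k) u ∈ S k := by
  induction u using FreeAlgebra.induction with
  | grade0 r =>
    intro s hs
    rw [AlgHom.commutes, ← Algebra.commutes r s, ← Algebra.smul_def]
    exact (S k).smul_mem r hs
  | grade1 i => intro s hs; exact S_mul_gen k i hs
  | mul a b iha ihb =>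
    intro s hs
    rw [map_mul, ← mul_assoc]
    exact ihb _ (iha _ hs)
  | add a b iha ihb =>
    intro s hs
    rw [map_add, mul_add]
    exact (S k).add_mem (iha _ hs) (ihb _ hs)

lemma S_mul_Y {s : RingQuot (Rel6' k)} (hs : s ∈ S k) : s * Yq k = 0 := by
  induction hs using Submodule.span_induction with
  | mem x h =>
    rcases h with h | h <;> subst h
    · exact rel_yy k
    · rw [mul_assoc, rel_gy, mul_neg', ← mul_assoc, rel_yy, zero_mul, neg_zero']
  | zero => simp
  | add x y hx hy ihx ihy => simp [add_mul, ihx, ihy]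
  | smul a x hx ih => simp [smul_mul_assoc, ih]

lemma YtY (t : RingQuot (Rel6' k)) : Yq k * t * Yq k = 0 := by
  obtain ⟨u, rfl⟩ := RingQuot.mkAlgHom_surjective k (Rel6' k) t
  exact S_mul_Y k (S_mul_mk k u _ (mem_S_Y k))

/-- A matrix representation, to show `Y ≠ 0`. -/
noncomputable def rep : RingQuot (Rel6' k) →ₐ[k] Matrix (Fin 2) (Fin 2) k :=
  RingQuot.liftAlgHom k
    ⟨FreeAlgebra.lift k ![!![1, 0; 0, -1], !![1, 0; 0, 0], !![0, 1; 0, 0]], by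
      rintro x y ⟨⟩ <;>
        simp only [map_mul, map_one, map_zero, map_neg, FreeAlgebra.lift_ι_apply,
          Matrix.cons_val_zero, Matrix.cons_val_one, Matrix.head_cons] <;>
        ext i j <;> fin_cases i <;> fin_cases j <;>
        simp [Matrix.mul_apply, Fin.sum_univ_succ]⟩

lemma Y_ne_zero : Yq k ≠ 0 := by
  intro h
  have h2 : rep k (Yq k) = !![0, 1; 0, 0] := by
    rw [Yq, rep, RingQuot.liftAlgHom_mkAlgHom_apply, FreeAlgebra.lift_ι_apply]
    rfl
  have h3 : (!![0, 1; 0, 0] : Matrix (Fin 2) (Fin 2) k) = 0 := by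
    rw [← h2, h, map_zero (rep k)]
  have := congrFun (congrFun h3 0) 1
  simp at this

lemma not_semisimple : ¬ IsSemisimpleRing (RingQuot (Rel6' k)) := by
  intro h
  set A := RingQuot (Rel6' k)
  have : IsSemisimpleModule A A := h
  obtain ⟨J, hJ⟩ := exists_isCompl (Submodule.span A {Yq k})
  have h1 : (1 : A) ∈ Submodule.span A {Yq k} ⊔ J := by rw [hJ.sup_eq_top]; trivial
  obtain ⟨e, he, f, hf, hef⟩ := Submodule.mem_sup.mp h1
  obtain ⟨a, rfl⟩ := Submodule.mem_span_singleton.mp he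
  have hYe : Yq k * (a • Yq k) = 0 := by
    rw [smul_eq_mul, ← mul_assoc]; exact YtY k a
  have hYJ : Yq k ∈ J := by
    have : Yq k = Yq k * (a • Yq k) + Yq k * f := by
      rw [← mul_add, hef, mul_one]
    rw [this, hYe, zero_add, ← smul_eq_mul]
    exact J.smul_mem _ hf
  have hY0 : Yq k ∈ (⊥ : Submodule A A) := by
    rw [← hJ.inf_eq_bot]
    exact ⟨Submodule.mem_span_singleton_self _, hYJ⟩
  exact Y_ne_zero k (by simpa using hY0)

end Stmt11Aux

/-- The algebra `A` presented by `G, X, Y` with the above relations is not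
semisimple: the two-sided ideal generated by `Y` is nonzero and squares to
zero. -/
theorem stmt11 (k : Type*) [Field k] :
    let Y : RingQuot (Rel6' k) := RingQuot.mkAlgHom k (Rel6' k) (FreeAlgebra.ι k 2)
    Y ≠ 0 ∧
    (∀ a b c d : RingQuot (Rel6' k), a * Y * b * (c * Y * d) = 0) ∧
    ¬ IsSemisimpleRing (RingQuot (Rel6' k)) := by
  intro Y
  refine ⟨Stmt11Aux.Y_ne_zero k, fun a b c d => ?_, Stmt11Aux.not_semisimple k⟩
  have : Y * (b * c) * Y = 0 := Stmt11Aux.YtY k (b * c)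
  calc a * Y * b * (c * Y * d) = a * (Y * (b * c) * Y) * d := by
        simp only [mul_assoc]
    _ = 0 := by rw [this, mul_zero, zero_mul]
end

section
/- Let k be a field of characteristic zero and let H be a 6-dimensional k-algebra of the form H = S ⊕ J (vector space direct sum) where S ≅ k × M_2(k) is a subalgebra, J = k·x is a 1-dimensional two-sided ideal with J² = 0, x·s = s·x = ε̄(s)·x for the unique algebra map ε̄: S → k, and ε̄(x) = 0. Suppose Δ: H → H ⊗ H is a k-algebra homomorphism with (ε ⊗ id)∘Δ = id = (id ⊗ ε)∘Δ, where ε: H → k is the algebra map extending ε̄ with ε(x) = 0. Then no such Δ exists, because writing Δ(x) in the basis {1, E_{ij}, x} the counit conditions force Δ(x) = 1⊗x + Σ E_{ij} ⊗ (Σ λ^{ij}_{st} E_{st} + μ_{ij} x) + x ⊗ (1 + Σ γ_{ij}E_{ij} + θ x), and then Δ(x)² contains the nonzero term 2·x⊗x plus terms in span{E_{ij}⊗E_{st}}, contradicting Δ(x²) = 0. -/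
/-!
Write `I = ker ε` and `P a = a - ε a • 1` for the projection onto `I`. The counit axioms give
`Δ x = (P ⊗ P)(Δ x) + 1 ⊗ x + x ⊗ 1`. Since `I` annihilates `x` on both sides and `x² = 0`,
squaring yields `0 = Δ (x²) = w² + 2 (x ⊗ x)` with `w = (P ⊗ P)(Δ x) ∈ I ⊗ I`. Here `I²` lies in
the image of `k × M₂(k)`, which misses `x`, so some functional `φ` with `φ x = 1` vanishes on `I²`;
then `φ ⊗ φ` kills `w²` and sends `x ⊗ x` to `1`, whence `2 = 0`.
-/

open TensorProduct

universe u v w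

section Augmented

variable {R : Type u} {A : Type v} [CommRing R] [Ring A] [Algebra R A]

def augmentationProj (ε : A →ₐ[R] R) : A →ₗ[R] A :=
  LinearMap.id - Algebra.linearMap R A ∘ₗ ε.toLinearMap

lemma augmentationProj_apply (ε : A →ₐ[R] R) (a : A) :
    augmentationProj ε a = a - algebraMap R A (ε a) := rfl

@[simp]
lemma counit_augmentationProj (ε : A →ₐ[R] R) (a : A) : ε (augmentationProj ε a) = 0 := by
  simp [augmentationProj_apply]

lemma map_augmentationProj_apply (ε : A →ₐ[R] R) (u : A ⊗[R] A) :
    map (augmentationProj ε) (augmentationProj ε) u =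
      u - 1 ⊗ₜ Algebra.TensorProduct.lid R A (Algebra.TensorProduct.map ε (AlgHom.id R A) u)
        - Algebra.TensorProduct.rid R R A (Algebra.TensorProduct.map (AlgHom.id R A) ε u) ⊗ₜ 1
        + ε (Algebra.TensorProduct.rid R R A (Algebra.TensorProduct.map (AlgHom.id R A) ε u))
          • (1 ⊗ₜ 1) := by
  induction u using TensorProduct.induction_on with
  | zero => simp
  | tmul a b =>
    simp only [map_tmul, augmentationProj_apply, Algebra.TensorProduct.map_tmul,
      Algebra.TensorProduct.lid_tmul, Algebra.TensorProduct.rid_tmul, AlgHom.id_apply,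
      map_smul, Algebra.algebraMap_eq_smul_one, sub_tmul, tmul_sub,
      smul_tmul, tmul_smul, smul_eq_mul]
    module
  | add u v hu hv => rw [map_add, hu, hv]; simp only [map_add, add_tmul, tmul_add, add_smul]; abel

def IsCounit (ε : A →ₐ[R] R) (Δ : A →ₐ[R] A ⊗[R] A) : Prop :=
  (∀ a, Algebra.TensorProduct.lid R A (Algebra.TensorProduct.map ε (AlgHom.id R A) (Δ a)) = a) ∧
    ∀ a, Algebra.TensorProduct.rid R R A (Algebra.TensorProduct.map (AlgHom.id R A) ε (Δ a)) = a

lemma IsCounit.map_augmentationProj_apply {ε : A →ₐ[R] R} {Δ : A →ₐ[R] A ⊗[R] A}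
    (hΔ : IsCounit ε Δ) (a : A) :
    map (augmentationProj ε) (augmentationProj ε) (Δ a) =
      Δ a - 1 ⊗ₜ a - a ⊗ₜ 1 + ε a • (1 ⊗ₜ 1) := by
  rw [_root_.map_augmentationProj_apply, hΔ.1, hΔ.2]

variable {f g : A →ₗ[R] A}

lemma map_mul_eq_zero {t : A ⊗[R] A} (h : ∀ a b, (f a ⊗ₜ g b) * t = 0) (v : A ⊗[R] A) :
    map f g v * t = 0 := by
  induction v using TensorProduct.induction_on with
  | zero => simp
  | tmul a b => exact h a b
  | add v w hv hw => rw [map_add, add_mul, hv, hw, add_zero]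

lemma mul_map_eq_zero {t : A ⊗[R] A} (h : ∀ a b, t * (f a ⊗ₜ g b) = 0) (v : A ⊗[R] A) :
    t * map f g v = 0 := by
  induction v using TensorProduct.induction_on with
  | zero => simp
  | tmul a b => exact h a b
  | add v w hv hw => rw [map_add, mul_add, hv, hw, add_zero]

lemma apply_map_mul_map_eq_zero {M : Type*} [AddCommGroup M] [Module R M]
    (T : A ⊗[R] A →ₗ[R] M)
    (h : ∀ a b c d, T ((f a ⊗ₜ g b) * (f c ⊗ₜ g d)) = 0) (v w : A ⊗[R] A) :
    T (map f g v * map f g w) = 0 := by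
  induction v using TensorProduct.induction_on with
  | zero => simp
  | tmul a b =>
    induction w using TensorProduct.induction_on with
    | zero => simp
    | tmul c d => exact h a b c d
    | add w w' hw hw' => rw [map_add, mul_add, map_add, hw, hw', add_zero]
  | add v v' hv hv' => rw [map_add, add_mul, map_add, hv, hv', add_zero]

theorem not_exists_isCounit_of_sq_eq_zero (h2 : (2 : R) ≠ 0) (ε : A →ₐ[R] R) {x : A}
    (hxx : x * x = 0) (hεx : ε x = 0)
    (hIx : ∀ a, ε a = 0 → a * x = 0) (hxI : ∀ a, ε a = 0 → x * a = 0)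
    (φ : A →ₗ[R] R) (hφx : φ x = 1)
    (hφ : ∀ a b, ε a = 0 → ε b = 0 → φ (a * b) = 0) :
    ¬ ∃ Δ, IsCounit ε Δ := by
  rintro ⟨Δ, hΔ⟩
  set w := map (augmentationProj ε) (augmentationProj ε) (Δ x) with hw
  have hΔx : Δ x = w + 1 ⊗ₜ x + x ⊗ₜ 1 := by
    rw [hw, hΔ.map_augmentationProj_apply, hεx, zero_smul, add_zero]; abel
  have hw_x1 : w * (x ⊗ₜ 1) = 0 := map_mul_eq_zero
    (fun a _ ↦ by simp [hIx _ (counit_augmentationProj ε a)]) _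
  have hw_1x : w * (1 ⊗ₜ x) = 0 := map_mul_eq_zero
    (fun _ b ↦ by simp [hIx _ (counit_augmentationProj ε b)]) _
  have hx1_w : (x ⊗ₜ 1) * w = 0 := mul_map_eq_zero
    (fun a _ ↦ by simp [hxI _ (counit_augmentationProj ε a)]) _
  have h1x_w : (1 ⊗ₜ x) * w = 0 := mul_map_eq_zero
    (fun _ b ↦ by simp [hxI _ (counit_augmentationProj ε b)]) _
  let T : A ⊗[R] A →ₗ[R] R := (TensorProduct.lid R R).toLinearMap ∘ₗ map φ φ
  have hT : ∀ a b, T (a ⊗ₜ b) = φ a * φ b := fun a b ↦ by simp [T]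
  have hTww : T (w * w) = 0 :=
    apply_map_mul_map_eq_zero T (fun a b c d ↦ by
      simp [hT, hφ _ _ (counit_augmentationProj ε a) (counit_augmentationProj ε c)]) _ _
  have hsq : Δ x * Δ x = w * w + x ⊗ₜ x + x ⊗ₜ x := by
    rw [hΔx]
    simp only [add_mul, mul_add, hw_x1, hw_1x, hx1_w, h1x_w, Algebra.TensorProduct.tmul_mul_tmul,
      one_mul, mul_one, hxx, tmul_zero, zero_tmul, add_zero, zero_add]
  apply h2
  calc (2 : R) = T (w * w) + T (x ⊗ₜ x) + T (x ⊗ₜ x) := by rw [hTww, hT, hφx]; norm_num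
    _ = T (Δ x * Δ x) := by rw [hsq, map_add, map_add]
    _ = 0 := by rw [← map_mul, hxx, map_zero, map_zero]

end Augmented

lemma Submodule.exists_dual_eq_one_of_notMem {K V : Type*} [Field K] [AddCommGroup V] [Module K V]
    {p : Submodule K V} {x : V} (hx : x ∉ p) :
    ∃ φ : Module.Dual K V, φ x = 1 ∧ ∀ y ∈ p, φ y = 0 := by
  obtain ⟨f, hfx, hfp⟩ := p.exists_dual_map_eq_bot_of_notMem hx inferInstance
  refine ⟨(f x)⁻¹ • f, by simp [hfx], fun y hy ↦ ?_⟩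
  have : f y ∈ p.map f := Submodule.mem_map_of_mem hy
  simp_all

section SquareZeroExtension

variable {k : Type u} {S : Type v} {H : Type w} [CommRing k] [Ring S] [Algebra k S] [Ring H]
  [Algebra k H] {ι : S →ₐ[k] H} {x : H}

lemma exists_eq_add_smul_of_span_eq_top (hspan : Submodule.span k (Set.range ι ∪ {x}) = ⊤)
    (a : H) : ∃ s : S, ∃ c : k, a = ι s + c • x := by
  have ha : a ∈ Submodule.span k (insert x (Set.range ι)) := by
    rw [← Set.union_singleton, hspan]; trivial
  obtain ⟨c, b, hb, rfl⟩ := Submodule.mem_span_insert.1 ha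
  have : Submodule.span k (Set.range ι) ≤ LinearMap.range ι.toLinearMap :=
    Submodule.span_le.2 (by rintro _ ⟨s, rfl⟩; exact ⟨s, rfl⟩)
  obtain ⟨s, rfl⟩ := this hb
  exact ⟨s, c, add_comm _ _⟩

variable {χ : S →ₐ[k] k}

lemma add_smul_mul (hxx : x * x = 0) (hsx : ∀ s, ι s * x = χ s • x) (s : S) (c : k) :
    (ι s + c • x) * x = χ s • x := by
  rw [add_mul, smul_mul_assoc, hsx, hxx, smul_zero, add_zero]

lemma mul_add_smul (hxx : x * x = 0) (hxs : ∀ s, x * ι s = χ s • x) (s : S) (c : k) :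
    x * (ι s + c • x) = χ s • x := by
  rw [mul_add, mul_smul_comm, hxs, hxx, smul_zero, add_zero]

lemma add_smul_mul_add_smul (hxx : x * x = 0) (hxs : ∀ s, x * ι s = χ s • x)
    (hsx : ∀ s, ι s * x = χ s • x) (s t : S) (c d : k) :
    (ι s + c • x) * (ι t + d • x) = ι (s * t) + (d * χ s + c * χ t) • x := by
  simp only [add_mul, mul_add, smul_mul_assoc, mul_smul_comm, hxs, hsx, hxx, map_mul, smul_zero,
    smul_smul, add_smul]
  module

end SquareZeroExtension

lemma notMem_range_of_mul_eq_fst_smul {k H : Type*} [Field k] [Ring H] [Algebra k H]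
    {ι : (k × Matrix (Fin 2) (Fin 2) k) →ₐ[k] H} (hι : Function.Injective ι) {x : H}
    (hx0 : x ≠ 0) (hxx : x * x = 0)
    (hsx : ∀ s : k × Matrix (Fin 2) (Fin 2) k, ι s * x = s.1 • x) :
    x ∉ LinearMap.range ι.toLinearMap := by
  rintro ⟨s, rfl : ι s = x⟩
  have hs2 : s.2 = 0 := by
    have := hsx (0, 1)
    rw [← map_mul, zero_smul, ← map_zero ι] at this
    simpa using congrArg Prod.snd (hι this)
  have hs1 : s.1 = 0 := by
    have := hxx
    rw [← map_mul, ← map_zero ι] at this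
    simpa using congrArg Prod.fst (hι this)
  exact hx0 (by rw [show s = 0 from Prod.ext hs1 hs2, map_zero])

theorem stmt12_general (k : Type*) [Field k] [CharZero k]
    (H : Type*) [Ring H] [Algebra k H]
    (ι : (k × Matrix (Fin 2) (Fin 2) k) →ₐ[k] H) (hι : Function.Injective ι)
    (x : H) (hx0 : x ≠ 0) (hxx : x * x = 0)
    (hxs : ∀ s : k × Matrix (Fin 2) (Fin 2) k, x * ι s = s.1 • x)
    (hsx : ∀ s : k × Matrix (Fin 2) (Fin 2) k, ι s * x = s.1 • x)
    (hspan : Submodule.span k (Set.range ι ∪ {x}) = ⊤)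
    (ε : H →ₐ[k] k) (hεx : ε x = 0)
    (hει : ∀ s : k × Matrix (Fin 2) (Fin 2) k, ε (ι s) = s.1) :
    ¬ ∃ Δ : H →ₐ[k] H ⊗[k] H,
        (∀ h : H, (Algebra.TensorProduct.lid k H)
            ((Algebra.TensorProduct.map ε (AlgHom.id k H)) (Δ h)) = h) ∧
        (∀ h : H, (Algebra.TensorProduct.rid k k H)
            ((Algebra.TensorProduct.map (AlgHom.id k H) ε) (Δ h)) = h) := by
  let χ := AlgHom.fst k k (Matrix (Fin 2) (Fin 2) k)
  have hker : ∀ a, ε a = 0 → ∃ s, ∃ c : k, χ s = 0 ∧ a = ι s + c • x := by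
    intro a ha
    obtain ⟨s, c, rfl⟩ := exists_eq_add_smul_of_span_eq_top hspan a
    exact ⟨s, c, by simpa [χ, hει, hεx] using ha, rfl⟩
  obtain ⟨φ, hφx, hφι⟩ := Submodule.exists_dual_eq_one_of_notMem
    (notMem_range_of_mul_eq_fst_smul hι hx0 hxx hsx)
  refine not_exists_isCounit_of_sq_eq_zero two_ne_zero ε hxx hεx ?_ ?_ φ hφx ?_
  · intro a ha
    obtain ⟨s, c, hs, rfl⟩ := hker a ha
    rw [add_smul_mul (χ := χ) hxx hsx, hs, zero_smul]
  · intro a ha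
    obtain ⟨s, c, hs, rfl⟩ := hker a ha
    rw [mul_add_smul (χ := χ) hxx hxs, hs, zero_smul]
  · intro a b ha hb
    obtain ⟨s, c, hs, rfl⟩ := hker a ha
    obtain ⟨t, d, ht, rfl⟩ := hker b hb
    rw [add_smul_mul_add_smul (χ := χ) hxx hxs hsx, hs, ht, map_add,
      hφι (ι (s * t)) ⟨s * t, rfl⟩]
    simp

/-- Let `H` be a 6-dimensional algebra of the form `S ⊕ J` where
`S ≅ k × M₂(k)` is a subalgebra (embedded by `ι`), `J = k·x` is a 1-dimensional
ideal with `x² = 0` and `x·ι(s) = ι(s)·x = ε̄(s)·x` where `ε̄` is the projection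
onto the factor `k`, and `ε : H → k` is the algebra map with `ε∘ι = ε̄`,
`ε(x) = 0`.  Then there is no algebra map `Δ : H → H ⊗ H` admitting `ε` as a
counit. -/
theorem stmt12 (k : Type*) [Field k] [CharZero k]
    (H : Type*) [Ring H] [Algebra k H] (hdim : Module.finrank k H = 6)
    (ι : (k × Matrix (Fin 2) (Fin 2) k) →ₐ[k] H) (hι : Function.Injective ι)
    (x : H) (hx0 : x ≠ 0) (hxx : x * x = 0)
    (hxs : ∀ s : k × Matrix (Fin 2) (Fin 2) k, x * ι s = s.1 • x)
    (hsx : ∀ s : k × Matrix (Fin 2) (Fin 2) k, ι s * x = s.1 • x)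
    (hspan : Submodule.span k (Set.range ι ∪ {x}) = ⊤)
    (ε : H →ₐ[k] k) (hεx : ε x = 0)
    (hει : ∀ s : k × Matrix (Fin 2) (Fin 2) k, ε (ι s) = s.1) :
    ¬ ∃ Δ : H →ₐ[k] H ⊗[k] H,
        (∀ h : H, (Algebra.TensorProduct.lid k H)
            ((Algebra.TensorProduct.map ε (AlgHom.id k H)) (Δ h)) = h) ∧
        (∀ h : H, (Algebra.TensorProduct.rid k k H)
            ((Algebra.TensorProduct.map (AlgHom.id k H) ε) (Δ h)) = h) :=
  stmt12_general k H ι hι x hx0 hxx hxs hsx hspan ε hεx hει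
end
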